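/- Let λ₁, λ₂ ∈ ℂ be nonzero. Then there exists a Hopf algebra automorphism φ of the Radford algebra H (a bijective ℂ-algebra homomorphism that is also a coalgebra homomorphism) such that φ(g) = g, φ(x) = λ₁x, and φ(y) = λ₂y. -/

import Mathlib

open TensorProduct

noncomputable section

/-- The Gaussian (`q`-)binomial coefficient `C(m, k)_q`, defined by the `q`-Pascal
recurrence `C(m+1, k+1)_q = C(m, k)_q + q^(k+1) * C(m, k+1)_q`. -/
def qBinom (q : ℂ) : ℕ → ℕ → ℂ
  | _, 0 => 1
  | 0, _ + 1 => 0
  | m + 1, k + 1 => qBinom q m k + q ^ (k + 1) * qBinom q m (k + 1)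

/-- The Radford algebra: a Hopf algebra `H` over `ℂ` generated by elements
`g, x, y` subject to the relations `g^n = 1`, `x^n = y^n = 0`, `xg = ω g x`,
`g y = ω y g`, `x y = ω y x`, where `ω` is a root of unity of order `n > 1`,
with the comultiplication, counit and antipode determined by
`Δ(g) = g ⊗ g`, `ε(g) = 1`, `S(g) = g^(n-1)`,
`Δ(x) = x ⊗ g + 1 ⊗ x`, `ε(x) = 0`, `S(x) = -x g^(n-1)`,
`Δ(y) = y ⊗ g + 1 ⊗ y`, `ε(y) = 0`, `S(y) = -y g^(n-1)`,
and with canonical `ℂ`-basis `{y^r x^s g^l | 0 ≤ r, s, l < n}`. -/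
structure RadfordAlgebra (n : ℕ) (ω : ℂ) (H : Type*) [Ring H] [HopfAlgebra ℂ H] where
  g : H
  x : H
  y : H
  hn : 1 < n
  hω : IsPrimitiveRoot ω n
  g_pow : g ^ n = 1
  x_pow : x ^ n = 0
  y_pow : y ^ n = 0
  rel_xg : x * g = ω • (g * x)
  rel_gy : g * y = ω • (y * g)
  rel_xy : x * y = ω • (y * x)
  comul_g : Coalgebra.comul (R := ℂ) g = g ⊗ₜ[ℂ] g
  counit_g : Coalgebra.counit (R := ℂ) g = 1
  antipode_g : HopfAlgebra.antipode (R := ℂ) g = g ^ (n - 1)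
  comul_x : Coalgebra.comul (R := ℂ) x = x ⊗ₜ[ℂ] g + 1 ⊗ₜ[ℂ] x
  counit_x : Coalgebra.counit (R := ℂ) x = 0
  antipode_x : HopfAlgebra.antipode (R := ℂ) x = -(x * g ^ (n - 1))
  comul_y : Coalgebra.comul (R := ℂ) y = y ⊗ₜ[ℂ] g + 1 ⊗ₜ[ℂ] y
  counit_y : Coalgebra.counit (R := ℂ) y = 0
  antipode_y : HopfAlgebra.antipode (R := ℂ) y = -(y * g ^ (n - 1))
  gen : Algebra.adjoin ℂ ({g, x, y} : Set H) = ⊤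
  basis : Module.Basis (Fin n × Fin n × Fin n) ℂ H
  basis_eq : ∀ r s l : Fin n, basis (r, s, l) = y ^ (r : ℕ) * x ^ (s : ℕ) * g ^ (l : ℕ)

/-- A `*`-structure on a Hopf algebra `H` over `ℂ`: a conjugate-linear map
`* : H → H` such that `(h*)* = h`, `(hl)* = l* h*`,
`Δ(h*) = Σ (h₁)* ⊗ (h₂)*` and `S(S(h*)*) = h` for all `h, l ∈ H`.
(The condition on `Δ` is expressed via the auxiliary additive map `starTensor`
on `H ⊗[ℂ] H` sending `a ⊗ b` to `a* ⊗ b*`, which is uniquely determined by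
its two defining properties.) -/
structure HopfStarStructure (H : Type*) [Ring H] [HopfAlgebra ℂ H] where
  star : H → H
  star_add : ∀ a b : H, star (a + b) = star a + star b
  star_smul : ∀ (c : ℂ) (a : H), star (c • a) = (starRingEnd ℂ c) • star a
  star_star : ∀ a : H, star (star a) = a
  star_mul : ∀ a b : H, star (a * b) = star b * star a
  starTensor : H ⊗[ℂ] H → H ⊗[ℂ] H
  starTensor_add : ∀ u v : H ⊗[ℂ] H, starTensor (u + v) = starTensor u + starTensor v
  starTensor_tmul : ∀ a b : H, starTensor (a ⊗ₜ[ℂ] b) = star a ⊗ₜ[ℂ] star b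
  comul_star : ∀ a : H,
    Coalgebra.comul (R := ℂ) (star a) = starTensor (Coalgebra.comul (R := ℂ) a)
  antipode_star : ∀ a : H,
    HopfAlgebra.antipode (R := ℂ) (star (HopfAlgebra.antipode (R := ℂ) (star a))) = a

/-- Two `*`-structures `*'` and `*''` on a Hopf algebra `H` over `ℂ` are
equivalent if there is a Hopf algebra automorphism `ψ` of `H` such that
`ψ(h^{*'}) = ψ(h)^{*''}` for all `h ∈ H`. -/
def HopfStarStructure.Equivalent {H : Type*} [Ring H] [HopfAlgebra ℂ H]
    (s₁ s₂ : HopfStarStructure H) : Prop :=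
  ∃ ψ : H ≃ₐc[ℂ] H, ∀ h : H, ψ (s₁.star h) = s₂.star (ψ h)

/-! The linear map scaling the basis vector `y^r x^s g^l` by `λ₂^r λ₁^s` is multiplicative,
because a product of two such monomials is a scalar multiple of the monomial whose exponents are
the sums. Its inverse is the map with scalars `λ₁⁻¹, λ₂⁻¹`, and it respects `Δ` and `ε` because
these are algebra maps, so it suffices to check this on the generators `g, x, y`. -/

section SkewCommute

variable {K A : Type*} [CommSemiring K] [Semiring A] [Algebra K A] {c : K} {a b : A}

theorem mul_pow_eq_smul_pow_mul (h : a * b = c • (b * a)) (l : ℕ) :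
    a * b ^ l = c ^ l • (b ^ l * a) := by
  induction l with
  | zero => simp
  | succ l ih =>
    calc a * b ^ (l + 1) = a * b ^ l * b := by rw [pow_succ, mul_assoc]
      _ = c ^ l • (b ^ l * (a * b)) := by rw [ih, smul_mul_assoc, mul_assoc]
      _ = c ^ (l + 1) • (b ^ (l + 1) * a) := by
        rw [h, mul_smul_comm, smul_smul, ← pow_succ, ← mul_assoc, ← pow_succ]

theorem pow_mul_pow_eq_smul_pow_mul_pow (h : a * b = c • (b * a)) (s l : ℕ) :
    a ^ s * b ^ l = c ^ (s * l) • (b ^ l * a ^ s) := by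
  induction s with
  | zero => simp
  | succ s ih =>
    calc a ^ (s + 1) * b ^ l = a ^ s * (a * b ^ l) := by rw [pow_succ, mul_assoc]
      _ = c ^ l • (a ^ s * b ^ l * a) := by
        rw [mul_pow_eq_smul_pow_mul h, mul_smul_comm, mul_assoc]
      _ = c ^ ((s + 1) * l) • (b ^ l * a ^ (s + 1)) := by
        rw [ih, smul_mul_assoc, smul_smul, mul_assoc, ← pow_succ, ← pow_add, add_mul,
          one_mul, add_comm]

end SkewCommute

def BialgEquiv.ofAlgEquivOfAdjoinEqTop {K A B : Type*} [CommSemiring K] [Semiring A] [Semiring B]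
    [Bialgebra K A] [Bialgebra K B] (f : A ≃ₐ[K] B) {s : Set A} (hs : Algebra.adjoin K s = ⊤)
    (counit_apply : ∀ a ∈ s, Coalgebra.counit (R := K) (f a) = Coalgebra.counit a)
    (comul_apply : ∀ a ∈ s, Coalgebra.comul (R := K) (f a) =
      Algebra.TensorProduct.map (f : A →ₐ[K] B) f (Coalgebra.comul a)) :
    A ≃ₐc[K] B :=
  .ofAlgEquiv f (AlgHom.ext_of_adjoin_eq_top hs fun a ha => counit_apply a ha)
    (AlgHom.ext_of_adjoin_eq_top hs fun a ha => (comul_apply a ha).symm)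

namespace RadfordAlgebra

variable {n : ℕ} {ω : ℂ} {H : Type*} [Ring H] [HopfAlgebra ℂ H] (R : RadfordAlgebra n ω H)

theorem algHom_ext {B : Type*} [Semiring B] [Algebra ℂ B] {f₁ f₂ : H →ₐ[ℂ] B}
    (hg : f₁ R.g = f₂ R.g) (hx : f₁ R.x = f₂ R.x) (hy : f₁ R.y = f₂ R.y) : f₁ = f₂ :=
  AlgHom.ext_of_adjoin_eq_top R.gen <| by rintro _ (rfl | rfl | rfl) <;> assumption

theorem rel_gx : R.g * R.x = ω⁻¹ • (R.x * R.g) := by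
  have hω : ω ≠ 0 := R.hω.ne_zero (by have := R.hn; omega)
  rw [R.rel_xg, smul_smul, inv_mul_cancel₀ hω, one_smul]

theorem g_pow_mod (l : ℕ) : R.g ^ l = R.g ^ (l % n) := by
  conv_lhs => rw [← Nat.div_add_mod l n, pow_add, pow_mul, R.g_pow, one_pow, one_mul]

def monomial (r s l : ℕ) : H :=
  R.y ^ r * R.x ^ s * R.g ^ l

theorem basis_apply (r s l : Fin n) : R.basis (r, s, l) = R.monomial r s l :=
  R.basis_eq r s l

theorem monomial_mul_monomial (r s l r' s' l' : ℕ) :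
    ∃ c : ℂ, R.monomial r s l * R.monomial r' s' l' =
      c • R.monomial (r + r') (s + s') (l + l') := by
  have hgy := pow_mul_pow_eq_smul_pow_mul_pow R.rel_gy l r'
  have hxy := pow_mul_pow_eq_smul_pow_mul_pow R.rel_xy s r'
  have hgx := pow_mul_pow_eq_smul_pow_mul_pow R.rel_gx l s'
  refine ⟨ω ^ (l * r') * ω⁻¹ ^ (l * s') * ω ^ (s * r'), ?_⟩
  calc R.monomial r s l * R.monomial r' s' l'
      = R.y ^ r * R.x ^ s * (R.g ^ l * R.y ^ r') * R.x ^ s' * R.g ^ l' := by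
        simp only [monomial, mul_assoc]
    _ = ω ^ (l * r') • (R.y ^ r * (R.x ^ s * R.y ^ r') * (R.g ^ l * R.x ^ s') * R.g ^ l') := by
        rw [hgy]; simp only [mul_smul_comm, smul_mul_assoc, mul_assoc]
    _ = (ω ^ (l * r') * ω⁻¹ ^ (l * s') * ω ^ (s * r')) •
          (R.y ^ r * R.y ^ r' * (R.x ^ s * R.x ^ s') * (R.g ^ l * R.g ^ l')) := by
        rw [hxy, hgx]; simp only [mul_smul_comm, smul_mul_assoc, smul_smul, mul_assoc]
    _ = _ := by simp only [monomial, pow_add]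

def scale (l₁ l₂ : ℂ) : H →ₗ[ℂ] H :=
  R.basis.constr ℂ fun i => (l₂ ^ (i.1 : ℕ) * l₁ ^ (i.2.1 : ℕ)) • R.basis i

theorem scale_monomial (l₁ l₂ : ℂ) (r s l : ℕ) :
    R.scale l₁ l₂ (R.monomial r s l) = (l₂ ^ r * l₁ ^ s) • R.monomial r s l := by
  by_cases hr : r < n
  · by_cases hs : s < n
    · have hb : R.monomial r s l =
          R.basis (⟨r, hr⟩, ⟨s, hs⟩, ⟨l % n, Nat.mod_lt _ (by have := R.hn; omega)⟩) := by
        rw [R.basis_eq, monomial, R.g_pow_mod l]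
      rw [hb, scale, Module.Basis.constr_basis]
    · have hx : R.x ^ s = 0 := pow_eq_zero_of_le (not_lt.mp hs) R.x_pow
      simp [monomial, hx]
  · have hy : R.y ^ r = 0 := pow_eq_zero_of_le (not_lt.mp hr) R.y_pow
    simp [monomial, hy]

theorem scale_mul (l₁ l₂ : ℂ) (a b : H) :
    R.scale l₁ l₂ (a * b) = R.scale l₁ l₂ a * R.scale l₁ l₂ b := by
  have on_basis : ∀ i j, R.scale l₁ l₂ (R.basis i * R.basis j) =
      R.scale l₁ l₂ (R.basis i) * R.scale l₁ l₂ (R.basis j) := by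
    rintro ⟨r, s, l⟩ ⟨r', s', l'⟩
    obtain ⟨c, hc⟩ := R.monomial_mul_monomial r s l r' s' l'
    rw [basis_apply, basis_apply, hc, map_smul, scale_monomial, scale_monomial, scale_monomial, smul_mul_smul_comm, hc,
      smul_smul, smul_smul, pow_add, pow_add]
    congr 1
    ring
  have hbilin : (LinearMap.mul ℂ H).compr₂ (R.scale l₁ l₂) =
      (LinearMap.mul ℂ H).compl₁₂ (R.scale l₁ l₂) (R.scale l₁ l₂) :=
    R.basis.ext fun i => R.basis.ext fun j => by simpa using on_basis i j
  simpa using LinearMap.congr_fun (LinearMap.congr_fun hbilin a) b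

theorem scale_one (l₁ l₂ : ℂ) : R.scale l₁ l₂ 1 = 1 := by
  simpa [monomial] using R.scale_monomial l₁ l₂ 0 0 0

def scaleAlgHom (l₁ l₂ : ℂ) : H →ₐ[ℂ] H :=
  .ofLinearMap (R.scale l₁ l₂) (R.scale_one l₁ l₂) (R.scale_mul l₁ l₂)

@[simp]
theorem scaleAlgHom_g (l₁ l₂ : ℂ) : R.scaleAlgHom l₁ l₂ R.g = R.g := by
  simpa [scaleAlgHom, monomial] using R.scale_monomial l₁ l₂ 0 0 1

@[simp]
theorem scaleAlgHom_x (l₁ l₂ : ℂ) : R.scaleAlgHom l₁ l₂ R.x = l₁ • R.x := by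
  simpa [scaleAlgHom, monomial] using R.scale_monomial l₁ l₂ 0 1 0

@[simp]
theorem scaleAlgHom_y (l₁ l₂ : ℂ) : R.scaleAlgHom l₁ l₂ R.y = l₂ • R.y := by
  simpa [scaleAlgHom, monomial] using R.scale_monomial l₁ l₂ 1 0 0

theorem scaleAlgHom_comp_scaleAlgHom (l₁ l₂ m₁ m₂ : ℂ) :
    (R.scaleAlgHom l₁ l₂).comp (R.scaleAlgHom m₁ m₂) = R.scaleAlgHom (l₁ * m₁) (l₂ * m₂) :=
  R.algHom_ext (by simp) (by simp [smul_smul, mul_comm]) (by simp [smul_smul, mul_comm])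

theorem scaleAlgHom_one_one : R.scaleAlgHom 1 1 = AlgHom.id ℂ H :=
  R.algHom_ext (by simp) (by simp) (by simp)

def scaleAlgEquiv {l₁ l₂ : ℂ} (h₁ : l₁ ≠ 0) (h₂ : l₂ ≠ 0) : H ≃ₐ[ℂ] H :=
  .ofAlgHom (R.scaleAlgHom l₁ l₂) (R.scaleAlgHom l₁⁻¹ l₂⁻¹)
    (by rw [scaleAlgHom_comp_scaleAlgHom, mul_inv_cancel₀ h₁, mul_inv_cancel₀ h₂,
      scaleAlgHom_one_one])
    (by rw [scaleAlgHom_comp_scaleAlgHom, inv_mul_cancel₀ h₁, inv_mul_cancel₀ h₂,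
      scaleAlgHom_one_one])

def scaleBialgEquiv {l₁ l₂ : ℂ} (h₁ : l₁ ≠ 0) (h₂ : l₂ ≠ 0) : H ≃ₐc[ℂ] H :=
  .ofAlgEquivOfAdjoinEqTop (R.scaleAlgEquiv h₁ h₂) R.gen
    (by
      rintro _ (rfl | rfl | rfl) <;>
        simp [scaleAlgEquiv, R.counit_x, R.counit_y])
    (by
      rintro _ (rfl | rfl | rfl) <;>
        simp [scaleAlgEquiv, R.comul_g, R.comul_x, R.comul_y, smul_tmul', tmul_smul])

@[simp]
theorem scaleBialgEquiv_apply {l₁ l₂ : ℂ} (h₁ : l₁ ≠ 0) (h₂ : l₂ ≠ 0) (a : H) :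
    R.scaleBialgEquiv h₁ h₂ a = R.scaleAlgHom l₁ l₂ a :=
  rfl

end RadfordAlgebra

/-- for nonzero `λ₁, λ₂ ∈ ℂ` there is a Hopf algebra
automorphism `φ` of the Radford algebra `H` with `φ(g) = g`, `φ(x) = λ₁ x`,
`φ(y) = λ₂ y`. -/
theorem radford_automorphism_of_scalars
    {n : ℕ} {ω : ℂ} {H : Type*} [Ring H] [HopfAlgebra ℂ H]
    (R : RadfordAlgebra n ω H) (l₁ l₂ : ℂ) (h₁ : l₁ ≠ 0) (h₂ : l₂ ≠ 0) :
    ∃ φ : H ≃ₐc[ℂ] H, φ R.g = R.g ∧ φ R.x = l₁ • R.x ∧ φ R.y = l₂ • R.y :=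
  ⟨R.scaleBialgEquiv h₁ h₂, by simp, by simp, by simp⟩
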